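/- For the '+c' model, the ANEC integral ∫_{−∞}^{∞} (ρ(t)+p(t))/a(t) dt diverges to +∞: with ρ+p = (2 − 8cX/α²)/(c+X)² and a = c+X, X = a_0·e^{2t/α}, a_0, c, α > 0, the integrand tends to 2/c³ > 0 as t → −∞ and is integrable near +∞, so the integral over ℝ equals +∞. -/
import Mathlib


open Filter MeasureTheory

theorem stmt_14 (a₀ c α : ℝ) (ha₀ : 0 < a₀) (hc : 0 < c) (hα : 0 < α)
    (X h : ℝ → ℝ) (hX : X = fun t => a₀ * Real.exp (2*t/α))
    (hh : h = fun t => (2 - 8 * c * X t / α^2) / (c + X t)^3) :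
    Tendsto h atBot (nhds (2 / c^3)) ∧
    (0:ℝ) < 2 / c^3 ∧
    IntegrableOn h (Set.Ici 0) ∧
    Tendsto (fun T : ℝ => ∫ t in (-T)..T, h t) atTop atTop := by
  have hXpos : ∀ t, 0 < X t := by
    intro t; rw [hX]; positivity
  have hden : ∀ t, (c + X t)^3 ≠ 0 := by
    intro t; have := hXpos t; positivity
  have hcont : Continuous h := by
    rw [hh]
    apply Continuous.div
    · rw [hX]; fun_prop
    · rw [hX]; fun_prop
    · exact hden
  -- part 1
  have hX0 : Tendsto X atBot (nhds 0) := by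
    rw [hX]
    have h1 : Tendsto (fun t : ℝ => 2*t/α) atBot atBot := by
      apply Tendsto.atBot_div_const hα
      exact tendsto_id.const_mul_atBot (by norm_num)
    have := Real.tendsto_exp_atBot.comp h1
    simpa using (this.const_mul a₀)
  have part1 : Tendsto h atBot (nhds (2 / c^3)) := by
    rw [hh]
    have hnum : Tendsto (fun t => 2 - 8 * c * X t / α^2) atBot (nhds 2) := by
      have := ((hX0.const_mul (8*c)).div_const (α^2)).const_sub 2
      simpa [mul_assoc] using this
    have hden2 : Tendsto (fun t => (c + X t)^3) atBot (nhds (c^3)) := by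
      have := (hX0.const_add c).pow 3
      simpa using this
    exact hnum.div hden2 (by positivity)
  have part2 : (0:ℝ) < 2 / c^3 := by positivity
  -- part 3
  have part3 : IntegrableOn h (Set.Ici 0) := by
    set C : ℝ := 2/a₀^3 + 8*c/(α^2 * a₀^2) with hC
    have hCpos : 0 < C := by positivity
    have hg : IntegrableOn (fun t => C * Real.exp (-(2/α) * t)) (Set.Ici (0:ℝ)) := by
      have := (exp_neg_integrableOn_Ioi (0:ℝ) (show (0:ℝ) < 2/α by positivity)).const_mul C
      rwa [integrableOn_Ici_iff_integrableOn_Ioi]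
    apply Integrable.mono' hg (hcont.aestronglyMeasurable.restrict)
    rw [ae_restrict_iff' measurableSet_Ici]
    refine Filter.Eventually.of_forall (fun t ht => ?_)
    have hy1 : (1:ℝ) ≤ Real.exp (2*t/α) := by
      apply Real.one_le_exp
      have ht' : (0:ℝ) ≤ t := ht
      positivity
    have hXt : X t = a₀ * Real.exp (2*t/α) := by rw [hX]
    set y := Real.exp (2*t/α) with hy
    have hypos : 0 < y := Real.exp_pos _
    have hexp : Real.exp (-(2/α) * t) = 1/y := by
      have e1 : -(2/α) * t = -(2*t/α) := by ring
      rw [hy, e1, Real.exp_neg, one_div]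
    rw [Real.norm_eq_abs, hh, hexp]
    simp only
    have hden3 : (0:ℝ) < (c + X t)^3 := by have := hXpos t; positivity
    have habs : |2 - 8 * c * X t / α^2| ≤ 2 + 8 * c * X t / α^2 := by
      have h1 : 0 ≤ 8 * c * X t / α^2 := by have := (hXpos t).le; positivity
      rw [abs_le]; constructor <;> nlinarith
    have hy2 : y ≤ y^2 := by nlinarith
    have hy3 : y^2 ≤ y^3 := by nlinarith
    have main : |2 - 8 * c * X t / α^2| * y ≤ C * (c + X t)^3 := by
      calc |2 - 8 * c * X t / α^2| * y ≤ (2 + 8 * c * X t / α^2) * y :=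
            mul_le_mul_of_nonneg_right habs hypos.le
        _ ≤ C * (a₀ * y)^3 := by
            rw [hXt, hC]
            have e : (2/a₀^3 + 8*c/(α^2 * a₀^2)) * (a₀*y)^3
                = 2 * y^3 + 8 * c * a₀ * y^3 / α^2 := by
              field_simp
            rw [e]
            have e2 : (2 + 8 * c * (a₀ * y) / α^2) * y = 2*y + 8*c*a₀*y^2/α^2 := by ring
            rw [e2]
            have h5 : 8*c*a₀*y^2/α^2 ≤ 8*c*a₀*y^3/α^2 := by
              apply div_le_div_of_nonneg_right _ (by positivity)
              nlinarith [mul_nonneg (mul_nonneg (by linarith : (0:ℝ) ≤ 8*c) ha₀.le)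
                (by linarith : (0:ℝ) ≤ y^3 - y^2)]
            nlinarith
        _ ≤ C * (c + X t)^3 := by
            apply mul_le_mul_of_nonneg_left _ hCpos.le
            apply pow_le_pow_left₀ (by positivity)
            rw [hXt]; linarith
    rw [abs_div, abs_of_pos hden3, div_le_iff₀ hden3]
    have e3 : C * (1/y) * (c + X t)^3 = (C * (c + X t)^3) / y := by ring
    rw [e3, le_div_iff₀ hypos]
    linarith
  -- part 4
  -- eventually h t ≥ 1/c³ at -∞
  have hlb : ∀ᶠ t in atBot, 1/c^3 ≤ h t := by
    have : Set.Ioi (1/c^3) ∈ nhds (2/c^3) := by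
      apply Ioi_mem_nhds
      rw [div_lt_div_iff₀ (by positivity) (by positivity)]
      nlinarith [pow_pos hc 3]
    filter_upwards [part1 this] with t ht using le_of_lt ht
  obtain ⟨M₀, hM₀⟩ := eventually_atBot.1 hlb
  set M : ℝ := min M₀ 0 with hM
  have hMle : M ≤ 0 := min_le_right _ _
  have hMlb : ∀ t ≤ M, 1/c^3 ≤ h t := fun t ht => hM₀ t (le_trans ht (min_le_left _ _))
  have hint : ∀ u v : ℝ, IntervalIntegrable h volume u v :=
    fun u v => hcont.intervalIntegrable u v
  set K : ℝ := (∫ t in (M)..(0:ℝ), |h t|) + ∫ t in Set.Ici (0:ℝ), |h t| with hK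
  have key : ∀ T : ℝ, -M ≤ T → (T + M) * (1/c^3) - K ≤ ∫ t in (-T)..T, h t := by
    intro T hT
    have h1 : ∫ t in (-T)..T, h t
        = (∫ t in (-T)..M, h t) + (∫ t in M..(0:ℝ), h t) + ∫ t in (0:ℝ)..T, h t := by
      rw [intervalIntegral.integral_add_adjacent_intervals (hint _ _) (hint _ _),
        intervalIntegral.integral_add_adjacent_intervals (hint _ _) (hint _ _)]
    have hTM : -T ≤ M := by linarith
    have hT0 : (0:ℝ) ≤ T := by linarith
    have h2 : (T + M) * (1/c^3) ≤ ∫ t in (-T)..M, h t := by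
      have := intervalIntegral.integral_mono_on (μ := volume) hTM
        (intervalIntegrable_const (c := 1/c^3)) (hint _ _)
        (fun x hx => hMlb x hx.2)
      simpa [sub_neg_eq_add, add_comm] using this
    have h3 : -(∫ t in (M)..(0:ℝ), |h t|) ≤ ∫ t in M..(0:ℝ), h t := by
      have := intervalIntegral.abs_integral_le_integral_abs (f := h) (μ := volume) hMle
      rw [abs_le] at this; exact this.1
    have h4 : -(∫ t in Set.Ici (0:ℝ), |h t|) ≤ ∫ t in (0:ℝ)..T, h t := by
      have habs := intervalIntegral.abs_integral_le_integral_abs (f := h) (μ := volume) hT0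
      have hsub : (∫ t in (0:ℝ)..T, |h t|) ≤ ∫ t in Set.Ici (0:ℝ), |h t| := by
        rw [intervalIntegral.integral_of_le hT0]
        apply setIntegral_mono_set part3.abs
        · exact Filter.Eventually.of_forall (fun x => abs_nonneg _)
        · exact HasSubset.Subset.eventuallyLE (fun x hx => le_of_lt hx.1)
      rw [abs_le] at habs
      linarith [habs.1]
    rw [h1, hK]; linarith
  refine ⟨part1, part2, part3, ?_⟩
  apply tendsto_atTop_mono' atTop (Filter.eventually_atTop.2 ⟨-M, key⟩)
  apply tendsto_atTop_add_const_right
  apply Tendsto.atTop_mul_const (by positivity)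
  exact tendsto_atTop_add_const_right _ _ tendsto_id
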